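/- For every (u1,…,u7) ∈ ℝ^7: the vectors Z1,…,Z7 are linearly independent (so dim W = 7); the radical W ∩ W⊥ equals span{Z1, Z2}; JZ1 = Z3 ∈ W and JZ5 = Z6 ∈ W; and JZ2 and JZ7 lie in W⊥ but not in W. (This verifies that the submanifold of Example 1 is a 2-lightlike submanifold carrying a proper STCR structure.) -/

import Mathlib

noncomputable section

/-- The semi-Euclidean metric of index 4 on `ℝ¹²`:
`ḡ(x,y) = −x₁y₁ − x₂y₂ − x₃y₃ − x₄y₄ + Σ_{i=5}^{12} xᵢyᵢ`. -/
def gbar : LinearMap.BilinForm ℝ (Fin 12 → ℝ) :=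
  LinearMap.mk₂ ℝ
    (fun x y => -(x 0 * y 0) - x 1 * y 1 - x 2 * y 2 - x 3 * y 3
      + x 4 * y 4 + x 5 * y 5 + x 6 * y 6 + x 7 * y 7
      + x 8 * y 8 + x 9 * y 9 + x 10 * y 10 + x 11 * y 11)
    (fun _ _ _ => by simp only [Pi.add_apply]; ring)
    (fun _ _ _ => by simp only [Pi.smul_apply, smul_eq_mul]; ring)
    (fun _ _ _ => by simp only [Pi.add_apply]; ring)
    (fun _ _ _ => by simp only [Pi.smul_apply, smul_eq_mul]; ring)

/-- The standard complex structure on `ℝ¹²`: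
`J(x₁,x₂,…,x₁₁,x₁₂) = (−x₂,x₁,…,−x₁₂,x₁₁)`. -/
def Jmap (x : Fin 12 → ℝ) : Fin 12 → ℝ :=
  ![-(x 1), x 0, -(x 3), x 2, -(x 5), x 4, -(x 7), x 6, -(x 9), x 8, -(x 11), x 10]

/-- The parametrization of the submanifold of Example 1. -/
def Φ (u : Fin 7 → ℝ) : Fin 12 → ℝ :=
  ![Real.sin (u 1), -Real.cos (u 1), u 0, u 2 - u 3 / 2, u 1, 0, u 0, u 2 + u 3 / 2,
    u 4 + u 6, u 5 - u 6, u 4 - u 6, u 5 + u 6]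

/-- The coordinate tangent vectors `Z_i = ∂Φ/∂u_i`. -/
def Z (u : Fin 7 → ℝ) (i : Fin 7) : Fin 12 → ℝ :=
  fderiv ℝ Φ u (Pi.single i 1)

/-!
Indices are 0-based: `Z u i` is the paper's `Z_{i+1}`.

The differential of `Φ` is explicit and only `Z u 1` depends on `u`, through the unit vector
`(cos u₂, sin u₂)`. A fixed linear map inverts `dΦ u` on the left, so the frame is independent.
The Gram matrix of `ḡ` on the frame is the constant matrix `0 ⊕ 0 ⊕ [[0,1],[1,0]] ⊕ 2 ⊕ 2 ⊕ 4`,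
whose kernel is spanned by the first two coordinates; this is the radical. `J Z₂` has a
non-zero sixth coordinate, which no tangent vector has, and `J Z₇` is orthogonal to `W` but, `J`
being an isometry, not null, so neither lies in `W`.
-/

open Real Submodule LinearMap.BilinForm

theorem LinearMap.BilinForm.mem_orthogonal_span_iff {R M : Type*} [CommRing R] [AddCommGroup M]
    [Module R M] (B : LinearMap.BilinForm R M) (s : Set M) (y : M) :
    y ∈ B.orthogonal (span R s) ↔ ∀ x ∈ s, B x y = 0 :=
  span_le (p := LinearMap.ker (LinearMap.flip B y))

theorem LinearMap.BilinForm.sum_smul_mem_orthogonal_span_range_iff {R M ι : Type*} [CommRing R]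
    [AddCommGroup M] [Module R M] [Fintype ι] (B : LinearMap.BilinForm R M) (v : ι → M)
    (g : ι → R) :
    ∑ l, g l • v l ∈ B.orthogonal (span R (Set.range v)) ↔ ∀ k, ∑ l, g l * B (v k) (v l) = 0 := by
  rw [mem_orthogonal_span_iff, Set.forall_mem_range]
  simp [map_sum]

theorem LinearMap.BilinForm.notMem_of_mem_orthogonal {R M : Type*} [CommRing R] [AddCommGroup M]
    [Module R M] {B : LinearMap.BilinForm R M} {N : Submodule R M} {y : M}
    (hy : y ∈ B.orthogonal N) (hyy : B y y ≠ 0) : y ∉ N :=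
  fun h => hyy (mem_orthogonal_iff.1 hy y h)

theorem notMem_span_range_of_forall_apply_eq_zero {R M ι : Type*} [CommRing R] [AddCommGroup M]
    [Module R M] {v : ι → M} {y : M} (f : M →ₗ[R] R) (hv : ∀ i, f (v i) = 0) (hy : f y ≠ 0) :
    y ∉ span R (Set.range v) :=
  fun h => hy (span_le (p := LinearMap.ker f) |>.2 (Set.range_subset_iff.2 hv) h)

theorem gbar_Jmap_Jmap (x y : Fin 12 → ℝ) : gbar (Jmap x) (Jmap y) = gbar x y := by
  simp only [gbar, LinearMap.mk₂_apply, Jmap, Matrix.cons_val]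
  ring

private abbrev pr (i : Fin 7) : (Fin 7 → ℝ) →L[ℝ] ℝ := ContinuousLinearMap.proj i

/-- Each component is written exactly as the differentiation rules produce it, so that
`hasFDerivAt_Φ` needs no rewriting. -/
def dΦ (u : Fin 7 → ℝ) : (Fin 7 → ℝ) →L[ℝ] (Fin 12 → ℝ) :=
  ContinuousLinearMap.pi
    ![cos (u 1) • pr 1, -(-sin (u 1) • pr 1), pr 0,
      pr 2 - (2:ℝ)⁻¹ • pr 3, pr 1, 0, pr 0, pr 2 + (2:ℝ)⁻¹ • pr 3,
      pr 4 + pr 6, pr 5 - pr 6, pr 4 - pr 6, pr 5 + pr 6]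

theorem hasFDerivAt_Φ (u : Fin 7 → ℝ) : HasFDerivAt Φ (dΦ u) u := by
  have hpr (i : Fin 7) : HasFDerivAt (fun x : Fin 7 → ℝ => x i) (pr i) u := hasFDerivAt_apply i u
  refine hasFDerivAt_pi'' fun j => ?_
  fin_cases j
  · exact (hpr 1).sin
  · exact (hpr 1).cos.neg
  · exact hpr 0
  · exact (hpr 2).sub ((hpr 3).mul_const (2:ℝ)⁻¹)
  · exact hpr 1
  · exact hasFDerivAt_const 0 u
  · exact hpr 0
  · exact (hpr 2).add ((hpr 3).mul_const (2:ℝ)⁻¹)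
  · exact (hpr 4).add (hpr 6)
  · exact (hpr 5).sub (hpr 6)
  · exact (hpr 4).sub (hpr 6)
  · exact (hpr 5).add (hpr 6)

theorem Z_eq (u : Fin 7 → ℝ) : Z u =
    ![![0, 0, 1, 0, 0, 0, 1, 0, 0, 0, 0, 0],
      ![cos (u 1), sin (u 1), 0, 0, 1, 0, 0, 0, 0, 0, 0, 0],
      ![0, 0, 0, 1, 0, 0, 0, 1, 0, 0, 0, 0],
      ![0, 0, 0, -2⁻¹, 0, 0, 0, 2⁻¹, 0, 0, 0, 0],
      ![0, 0, 0, 0, 0, 0, 0, 0, 1, 0, 1, 0],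
      ![0, 0, 0, 0, 0, 0, 0, 0, 0, 1, 0, 1],
      ![0, 0, 0, 0, 0, 0, 0, 0, 1, -1, -1, 1]] := by
  ext i j
  rw [Z, (hasFDerivAt_Φ u).fderiv]
  fin_cases i <;> fin_cases j <;> simp [dΦ]

/-- A left inverse of `dΦ u` for every `u`. -/
def tangentCoords : (Fin 12 → ℝ) →ₗ[ℝ] (Fin 7 → ℝ) :=
  let p (j : Fin 12) : (Fin 12 → ℝ) →ₗ[ℝ] ℝ := LinearMap.proj j
  LinearMap.pi ![p 2, p 4, (2:ℝ)⁻¹ • (p 3 + p 7), p 7 - p 3, (2:ℝ)⁻¹ • (p 8 + p 10),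
    (2:ℝ)⁻¹ • (p 9 + p 11), (2:ℝ)⁻¹ • (p 8 - p 10)]

theorem tangentCoords_Z (u : Fin 7 → ℝ) (i : Fin 7) : tangentCoords (Z u i) = Pi.single i 1 := by
  rw [Z_eq]
  ext j
  fin_cases i <;> fin_cases j <;> simp [tangentCoords] <;> norm_num

theorem linearIndependent_Z (u : Fin 7 → ℝ) : LinearIndependent ℝ (Z u) := by
  refine LinearIndependent.of_comp tangentCoords ?_
  convert (Pi.basisFun ℝ (Fin 7)).linearIndependent using 1
  ext i : 1
  simp [tangentCoords_Z]

def gramZ : Matrix (Fin 7) (Fin 7) ℝ :=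
  !![0, 0, 0, 0, 0, 0, 0;
     0, 0, 0, 0, 0, 0, 0;
     0, 0, 0, 1, 0, 0, 0;
     0, 0, 1, 0, 0, 0, 0;
     0, 0, 0, 0, 2, 0, 0;
     0, 0, 0, 0, 0, 2, 0;
     0, 0, 0, 0, 0, 0, 4]

theorem gbar_Z_Z (u : Fin 7 → ℝ) (k l : Fin 7) : gbar (Z u k) (Z u l) = gramZ k l := by
  rw [Z_eq]
  fin_cases k <;> fin_cases l <;> simp [gbar, gramZ, ← sq] <;> linarith [sin_sq_add_cos_sq (u 1)]

theorem inf_orthogonal_span_Z (u : Fin 7 → ℝ) :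
    span ℝ (Set.range (Z u)) ⊓ gbar.orthogonal (span ℝ (Set.range (Z u)))
      = span ℝ {Z u 0, Z u 1} := by
  apply le_antisymm
  · rintro _ ⟨hW, hW'⟩
    obtain ⟨g, rfl⟩ := (mem_span_range_iff_exists_fun ℝ).1 hW
    have hg := (sum_smul_mem_orthogonal_span_range_iff gbar (Z u) g).1 hW'
    simp only [gbar_Z_Z, Fin.sum_univ_seven] at hg
    have h2 : g 2 = 0 := by simpa [gramZ] using hg 3
    have h3 : g 3 = 0 := by simpa [gramZ] using hg 2
    have h4 : g 4 = 0 := by simpa [gramZ] using hg 4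
    have h5 : g 5 = 0 := by simpa [gramZ] using hg 5
    have h6 : g 6 = 0 := by simpa [gramZ] using hg 6
    exact mem_span_pair.2 ⟨g 0, g 1, by simp [Fin.sum_univ_seven, h2, h3, h4, h5, h6]⟩
  · have hnull (i : Fin 7) (hi : ∀ k, gramZ k i = 0) :
        Z u i ∈ span ℝ (Set.range (Z u)) ⊓ gbar.orthogonal (span ℝ (Set.range (Z u))) :=
      ⟨subset_span ⟨i, rfl⟩, (mem_orthogonal_span_iff _ _ _).2 <|
        Set.forall_mem_range.2 fun k => (gbar_Z_Z u k i).trans (hi k)⟩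
    rw [span_le, Set.insert_subset_iff, Set.singleton_subset_iff]
    exact ⟨hnull 0 fun k => by fin_cases k <;> rfl, hnull 1 fun k => by fin_cases k <;> rfl⟩

theorem Jmap_Z_zero (u : Fin 7 → ℝ) : Jmap (Z u 0) = Z u 2 := by
  simp [Z_eq, Jmap]

theorem Jmap_Z_four (u : Fin 7 → ℝ) : Jmap (Z u 4) = Z u 5 := by
  simp [Z_eq, Jmap]

theorem Jmap_Z_one_mem_orthogonal (u : Fin 7 → ℝ) :
    Jmap (Z u 1) ∈ gbar.orthogonal (span ℝ (Set.range (Z u))) := by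
  refine (mem_orthogonal_span_iff _ _ _).2 (Set.forall_mem_range.2 fun k => ?_)
  rw [Z_eq]
  fin_cases k <;> simp [gbar, Jmap, mul_comm]

theorem Jmap_Z_six_mem_orthogonal (u : Fin 7 → ℝ) :
    Jmap (Z u 6) ∈ gbar.orthogonal (span ℝ (Set.range (Z u))) := by
  refine (mem_orthogonal_span_iff _ _ _).2 (Set.forall_mem_range.2 fun k => ?_)
  rw [Z_eq]
  fin_cases k <;> simp [gbar, Jmap]

theorem Jmap_Z_one_notMem_span (u : Fin 7 → ℝ) : Jmap (Z u 1) ∉ span ℝ (Set.range (Z u)) :=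
  notMem_span_range_of_forall_apply_eq_zero (LinearMap.proj 5)
    (fun k => by rw [Z_eq]; fin_cases k <;> rfl) (by simp [Z_eq, Jmap])

theorem Jmap_Z_six_notMem_span (u : Fin 7 → ℝ) : Jmap (Z u 6) ∉ span ℝ (Set.range (Z u)) :=
  notMem_of_mem_orthogonal (Jmap_Z_six_mem_orthogonal u) <| by
    rw [gbar_Jmap_Jmap, gbar_Z_Z]
    simp [gramZ]

theorem example1_is_proper_STCR (u : Fin 7 → ℝ) :
    LinearIndependent ℝ (Z u) ∧
    Module.finrank ℝ (Submodule.span ℝ (Set.range (Z u))) = 7 ∧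
    Submodule.span ℝ (Set.range (Z u)) ⊓
        LinearMap.BilinForm.orthogonal gbar (Submodule.span ℝ (Set.range (Z u)))
      = Submodule.span ℝ {Z u 0, Z u 1} ∧
    Jmap (Z u 0) = Z u 2 ∧ Z u 2 ∈ Submodule.span ℝ (Set.range (Z u)) ∧
    Jmap (Z u 4) = Z u 5 ∧ Z u 5 ∈ Submodule.span ℝ (Set.range (Z u)) ∧
    Jmap (Z u 1) ∈ LinearMap.BilinForm.orthogonal gbar (Submodule.span ℝ (Set.range (Z u))) ∧
    Jmap (Z u 1) ∉ Submodule.span ℝ (Set.range (Z u)) ∧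
    Jmap (Z u 6) ∈ LinearMap.BilinForm.orthogonal gbar (Submodule.span ℝ (Set.range (Z u))) ∧
    Jmap (Z u 6) ∉ Submodule.span ℝ (Set.range (Z u)) := by
  have hli := linearIndependent_Z u
  exact ⟨hli, by rw [finrank_span_eq_card hli, Fintype.card_fin], inf_orthogonal_span_Z u,
    Jmap_Z_zero u, subset_span ⟨2, rfl⟩, Jmap_Z_four u, subset_span ⟨5, rfl⟩,
    Jmap_Z_one_mem_orthogonal u, Jmap_Z_one_notMem_span u, Jmap_Z_six_mem_orthogonal u,
    Jmap_Z_six_notMem_span u⟩
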